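/- Derivative of the minimum energy with respect to a single multi-edge weight: Assume the multigraph Φ(H) of H is connected. Let W ∈ 𝒲 be a valid weight assignment, let u ≠ v be vertices contained in a common hyperedge, and let x* : V → ℝ with x* u = 1 and x* v = 0 attain the minimum energy, i.e. E^W(x*) = 𝓔^W_{u,v}. Fix a hyperedge e₀ of H and an unordered pair {a,b} ⊆ e₀, and for t ∈ ℝ let W_t be the weight assignment agreeing with W except that the weight of the pair {a,b} within e₀ is set to t. Then the function t ↦ inf { E^{W_t}(x) : x : V → ℝ, x u = 1, x v = 0 } is differentiable at t = w_{e₀}(a,b) with derivative (x* a − x* b)²; that is, the partial derivative of the minimum energy with respect to the weight of a multi-edge equals the energy contribution of that multi-edge under the optimal potentials. -/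

import Mathlib

open Finset

/-- The function on unordered pairs sending `{a,b}` to `(x a - x b)^2`. -/
noncomputable def sqd {V : Type*} (x : V → ℝ) : Sym2 V → ℝ :=
  Sym2.lift ⟨fun a b => (x a - x b) ^ 2, fun a b => by ring⟩

/-- The unordered pairs of distinct vertices inside a hyperedge `e`. -/
def pairs {V : Type*} [DecidableEq V] (e : Finset V) : Finset (Sym2 V) :=
  e.sym2.filter fun p => ¬ p.IsDiag

/-- The energy `E^W(x)` of a potential vector `x` under weight assignment `w`. -/
noncomputable def energy {V : Type*} [DecidableEq V] (H : Finset (Finset V))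
    (w : Finset V → Sym2 V → ℝ) (x : V → ℝ) : ℝ :=
  ∑ e ∈ H, ∑ p ∈ pairs e, w e p * sqd x p

/-- Validity of a weight assignment. -/
def ValidWeight {V : Type*} [DecidableEq V] (H : Finset (Finset V)) (r : ℕ)
    (w : Finset V → Sym2 V → ℝ) : Prop :=
  (∀ e ∈ H, ∀ p ∈ pairs e, 1 / (8 * (r : ℝ) ^ 2) ≤ w e p) ∧
  (∀ e ∈ H, ∑ p ∈ pairs e, w e p = 1)

/-- The minimum energy `𝓔^W_{u,v}` between `u` and `v` under `w`. -/
noncomputable def minEnergy {V : Type*} [DecidableEq V] (H : Finset (Finset V))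
    (w : Finset V → Sym2 V → ℝ) (u v : V) : ℝ :=
  ⨅ x : {x : V → ℝ // x u = 1 ∧ x v = 0}, energy H w x.1

/-- The (simple graph underlying the) multigraph `Φ(H)` of a hypergraph `H`. -/
def multiGraph {V : Type*} (H : Finset (Finset V)) : SimpleGraph V where
  Adj a b := a ≠ b ∧ ∃ e ∈ H, a ∈ e ∧ b ∈ e
  symm := ⟨by
    rintro a b ⟨hab, e, he, ha, hb⟩
    exact ⟨Ne.symm hab, e, he, hb, ha⟩⟩
  loopless := ⟨fun a h => h.1 rfl⟩

noncomputable def cross {V : Type*} (x h : V → ℝ) : Sym2 V → ℝ :=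
  Sym2.lift ⟨fun a b => (x a - x b) * (h a - h b), fun a b => by ring⟩

lemma sqd_nonneg' {V : Type*} (x : V → ℝ) (p : Sym2 V) : 0 ≤ sqd x p := by
  induction p using Sym2.inductionOn with
  | hf a b => simp only [sqd, Sym2.lift_mk]; positivity

lemma sqd_expand {V : Type*} (x h : V → ℝ) (t : ℝ) (p : Sym2 V) :
    sqd (fun z => x z + t * h z) p = sqd x p + 2 * t * cross x h p + t ^ 2 * sqd h p := by
  induction p using Sym2.inductionOn with
  | hf a b => simp only [sqd, cross, Sym2.lift_mk]; ring

lemma cross_sq {V : Type*} (x h : V → ℝ) (p : Sym2 V) :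
    cross x h p ^ 2 = sqd x p * sqd h p := by
  induction p using Sym2.inductionOn with
  | hf a b => simp only [sqd, cross, Sym2.lift_mk]; ring

lemma energy_expand {V : Type*} [DecidableEq V] (H : Finset (Finset V))
    (w : Finset V → Sym2 V → ℝ) (x h : V → ℝ) (t : ℝ) :
    energy H w (fun z => x z + t * h z)
      = energy H w x + 2 * t * (∑ e ∈ H, ∑ p ∈ pairs e, w e p * cross x h p)
        + t ^ 2 * energy H w h := by
  unfold energy
  rw [Finset.mul_sum, Finset.mul_sum, ← Finset.sum_add_distrib, ← Finset.sum_add_distrib]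
  refine Finset.sum_congr rfl fun e _ => ?_
  rw [Finset.mul_sum, Finset.mul_sum, ← Finset.sum_add_distrib, ← Finset.sum_add_distrib]
  refine Finset.sum_congr rfl fun p _ => ?_
  rw [sqd_expand]; ring

lemma energy_modify {V : Type*} [DecidableEq V] (H : Finset (Finset V))
    (w : Finset V → Sym2 V → ℝ) (e₀ : Finset V) (he₀ : e₀ ∈ H)
    (p₀ : Sym2 V) (hp₀ : p₀ ∈ pairs e₀) (t : ℝ) (y : V → ℝ) :
    energy H (fun e p => if e = e₀ ∧ p = p₀ then t else w e p) y
      = energy H w y + (t - w e₀ p₀) * sqd y p₀ := by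
  unfold energy
  have key : ∀ e ∈ H,
      ∑ p ∈ pairs e, (if e = e₀ ∧ p = p₀ then t else w e p) * sqd y p
        = (∑ p ∈ pairs e, w e p * sqd y p)
          + (if e = e₀ then (t - w e₀ p₀) * sqd y p₀ else 0) := by
    intro e _
    by_cases h : e = e₀
    · subst h
      simp only [true_and, if_pos rfl]
      have step : ∀ p ∈ pairs e, (if p = p₀ then t else w e p) * sqd y p
          = w e p * sqd y p + (if p = p₀ then (t - w e p) * sqd y p else 0) := by
        intro p _
        by_cases hp : p = p₀ <;> simp [hp] <;> ring
      rw [Finset.sum_congr rfl step, Finset.sum_add_distrib]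
      congr 1
      rw [Finset.sum_ite_eq' (pairs e) p₀ (fun p => (t - w e p) * sqd y p)]
      simp [hp₀]
    · simp [h]
  rw [Finset.sum_congr rfl key, Finset.sum_add_distrib,
    Finset.sum_ite_eq' H e₀ (fun _ => (t - w e₀ p₀) * sqd y p₀), if_pos he₀]

set_option maxHeartbeats 1000000 in
/-- **Derivative of the minimum energy with respect to a single multi-edge weight.**
If `x*` attains the minimum energy `𝓔^W_{u,v}`, then the map sending the weight of the
multi-edge `{a,b}` of the hyperedge `e₀` to the corresponding minimum energy is
differentiable at `w_{e₀}(a,b)` with derivative `(x* a − x* b)²`. -/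
theorem minEnergy_hasDerivAt_weight
    {V : Type*} [Fintype V] [DecidableEq V]
    (H : Finset (Finset V)) (r : ℕ) (hr : 2 ≤ r)
    (harity : ∀ e ∈ H, r ≤ e.card ∧ e.card ≤ 2 * r)
    (hconn : (multiGraph H).Connected)
    (w : Finset V → Sym2 V → ℝ) (hw : ValidWeight H r w)
    (u v : V) (huv : u ≠ v) (hcommon : ∃ e ∈ H, u ∈ e ∧ v ∈ e)
    (xstar : V → ℝ) (hxu : xstar u = 1) (hxv : xstar v = 0)
    (hopt : energy H w xstar = minEnergy H w u v)
    (e₀ : Finset V) (he₀ : e₀ ∈ H) (p₀ : Sym2 V) (hp₀ : p₀ ∈ pairs e₀) :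
    HasDerivAt
      (fun t : ℝ =>
        ⨅ x : {x : V → ℝ // x u = 1 ∧ x v = 0},
          energy H (fun e p => if e = e₀ ∧ p = p₀ then t else w e p) x.1)
      (sqd xstar p₀) (w e₀ p₀) := by
  classical
  set F : ℝ → ℝ := fun t =>
    ⨅ x : {x : V → ℝ // x u = 1 ∧ x v = 0},
      energy H (fun e p => if e = e₀ ∧ p = p₀ then t else w e p) x.1 with hFdef
  set c : ℝ := 1 / (8 * (r : ℝ) ^ 2) with hcdef
  have hr0 : (0:ℝ) < r := by
    have : (0:ℕ) < r := lt_of_lt_of_le (by norm_num) hr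
    exact_mod_cast this
  have hc : 0 < c := by positivity
  set A : ℝ := sqd xstar p₀ with hAdef
  have hA : 0 ≤ A := sqd_nonneg' _ _
  set w₀ : ℝ := w e₀ p₀ with hw₀def
  set Estar : ℝ := energy H w xstar with hEdef
  haveI : Nonempty {x : V → ℝ // x u = 1 ∧ x v = 0} :=
    ⟨⟨fun z => if z = u then 1 else 0, by simp, by simp [huv.symm]⟩⟩
  have hwnn : ∀ e ∈ H, ∀ p ∈ pairs e, 0 ≤ w e p :=
    fun e he p hp => le_trans hc.le (hw.1 e he p hp)
  have hEnn : ∀ y : V → ℝ, 0 ≤ energy H w y := by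
    intro y
    refine Finset.sum_nonneg fun e he => Finset.sum_nonneg fun p hp => ?_
    exact mul_nonneg (hwnn e he p hp) (sqd_nonneg' _ _)
  have hbdd : BddBelow (Set.range fun x : {x : V → ℝ // x u = 1 ∧ x v = 0} =>
      energy H w x.1) := ⟨0, by rintro _ ⟨x, rfl⟩; exact hEnn _⟩
  have hmin : ∀ x : {x : V → ℝ // x u = 1 ∧ x v = 0}, Estar ≤ energy H w x.1 := by
    intro x
    rw [hopt, minEnergy]
    exact ciInf_le hbdd x
  -- structural facts about each feasible x
  have struct : ∀ x : {x : V → ℝ // x u = 1 ∧ x v = 0}, ∃ B D₀ : ℝ,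
      0 ≤ D₀ ∧ B ^ 2 = A * D₀ ∧ sqd x.1 p₀ = A + 2 * B + D₀ ∧
      Estar + c * D₀ ≤ energy H w x.1 := by
    intro x
    set h : V → ℝ := fun z => x.1 z - xstar z with hhdef
    have hhu : h u = 0 := by simp [hhdef, x.2.1, hxu]
    have hhv : h v = 0 := by simp [hhdef, x.2.2, hxv]
    refine ⟨cross xstar h p₀, sqd h p₀, sqd_nonneg' _ _, cross_sq _ _ _, ?_, ?_⟩
    · have hx1 : x.1 = fun z => xstar z + 1 * h z := by
        funext z; simp [hhdef]
      rw [hx1, sqd_expand]; ring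
    · set C : ℝ := ∑ e ∈ H, ∑ p ∈ pairs e, w e p * cross xstar h p with hCdef
      set D : ℝ := energy H w h with hDdef
      have hD : 0 ≤ D := hEnn h
      have q : ∀ s : ℝ, 0 ≤ 2 * s * C + s ^ 2 * D := by
        intro s
        have h1 : Estar ≤ energy H w (fun z => xstar z + s * h z) := by
          refine hmin ⟨fun z => xstar z + s * h z, ?_, ?_⟩
          · simp [hxu, hhu]
          · simp [hxv, hhv]
        rw [energy_expand] at h1
        rw [← hCdef, ← hDdef, ← hEdef] at h1
        linarith
      have hC : C = 0 := by
        have hD1 : (0:ℝ) < D + 1 := by linarith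
        have h1 := q (-C / (D + 1))
        have h2 : 0 ≤ (2 * (-C / (D + 1)) * C + (-C / (D + 1)) ^ 2 * D) * (D + 1) ^ 2 :=
          mul_nonneg h1 (by positivity)
        have h3 : (2 * (-C / (D + 1)) * C + (-C / (D + 1)) ^ 2 * D) * (D + 1) ^ 2
            = -(C ^ 2 * (D + 2)) := by
          field_simp; ring
        rw [h3] at h2
        have h4 : C ^ 2 = 0 := le_antisymm (by nlinarith [sq_nonneg C]) (sq_nonneg C)
        exact sq_eq_zero_iff.mp h4
      have hEx : energy H w x.1 = Estar + D := by
        have hx1 : x.1 = fun z => xstar z + 1 * h z := by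
          funext z; simp [hhdef]
        rw [hx1, energy_expand, ← hCdef, ← hDdef, ← hEdef, hC]; ring
      have t1 : w e₀ p₀ * sqd h p₀ ≤ ∑ p ∈ pairs e₀, w e₀ p * sqd h p :=
        Finset.single_le_sum (f := fun p => w e₀ p * sqd h p)
          (fun p hp => mul_nonneg (hwnn e₀ he₀ p hp) (sqd_nonneg' _ _)) hp₀
      have t2 : (∑ p ∈ pairs e₀, w e₀ p * sqd h p) ≤ D := by
        rw [hDdef]
        unfold energy
        exact Finset.single_le_sum (f := fun e => ∑ p ∈ pairs e, w e p * sqd h p)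
          (fun e he => Finset.sum_nonneg fun p hp =>
            mul_nonneg (hwnn e he p hp) (sqd_nonneg' _ _)) he₀
      have t3 : c * sqd h p₀ ≤ w e₀ p₀ * sqd h p₀ :=
        mul_le_mul_of_nonneg_right (hw.1 e₀ he₀ p₀ hp₀) (sqd_nonneg' _ _)
      linarith
  -- per-point lower bound for the perturbed energy
  have main : ∀ t : ℝ, |t - w₀| ≤ c / 2 → ∀ x : {x : V → ℝ // x u = 1 ∧ x v = 0},
      Estar + (t - w₀) * A - 2 * A * (t - w₀) ^ 2 / c
        ≤ energy H (fun e p => if e = e₀ ∧ p = p₀ then t else w e p) x.1 := by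
    intro t ht x
    obtain ⟨B, D₀, hD₀, hB2, hsq, hEl⟩ := struct x
    rw [energy_modify H w e₀ he₀ p₀ hp₀, hsq, ← hw₀def]
    set τ : ℝ := t - w₀ with hτdef
    have hτ1 : -(c / 2) ≤ τ := neg_le_of_abs_le ht
    have hτ2 : τ ≤ c / 2 := le_of_abs_le ht
    -- key algebraic inequality
    have key : 0 ≤ c * (c * D₀ + 2 * τ * B + τ * D₀) + 2 * A * τ ^ 2 := by
      rcases eq_or_lt_of_le hA with hA0 | hA0
      · have hB0 : B = 0 := by
          have : B ^ 2 = 0 := by rw [hB2, ← hA0]; ring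
          exact sq_eq_zero_iff.mp this
        rw [hB0, ← hA0]
        nlinarith [mul_nonneg (mul_nonneg hc.le hD₀) (show (0:ℝ) ≤ c + τ by linarith)]
      · have hid : A * (c * (c * D₀ + 2 * τ * B + τ * D₀) + 2 * A * τ ^ 2)
            = (1/2) * (c * B + 2 * τ * A) ^ 2 + (c * A * D₀) * (c / 2 + τ)
              + (c ^ 2 / 2) * (A * D₀ - B ^ 2) := by ring
        have hX : 0 ≤ A * (c * (c * D₀ + 2 * τ * B + τ * D₀) + 2 * A * τ ^ 2) := by
          rw [hid, hB2]
          have h1 := sq_nonneg (c * B + 2 * τ * A)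
          have h2 : 0 ≤ (c * A * D₀) * (c / 2 + τ) :=
            mul_nonneg (mul_nonneg (mul_nonneg hc.le hA0.le) hD₀) (by linarith)
          nlinarith [h1, h2]
        nlinarith [hX, hA0]
    have hdiv : -(2 * A * τ ^ 2) / c ≤ c * D₀ + 2 * τ * B + τ * D₀ := by
      rw [div_le_iff₀ hc]; linarith
    have hgoal : Estar + τ * A - 2 * A * τ ^ 2 / c
        ≤ energy H w x.1 + τ * (A + 2 * B + D₀) := by
      have : -(2 * A * τ ^ 2) / c = -(2 * A * τ ^ 2 / c) := by ring
      rw [this] at hdiv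
      linarith [hEl, hdiv]
    exact hgoal
  have lower : ∀ t : ℝ, |t - w₀| ≤ c / 2 →
      Estar + (t - w₀) * A - 2 * A * (t - w₀) ^ 2 / c ≤ F t :=
    fun t ht => le_ciInf (main t ht)
  have upper : ∀ t : ℝ, |t - w₀| ≤ c / 2 → F t ≤ Estar + (t - w₀) * A := by
    intro t ht
    have hb : BddBelow (Set.range fun x : {x : V → ℝ // x u = 1 ∧ x v = 0} =>
        energy H (fun e p => if e = e₀ ∧ p = p₀ then t else w e p) x.1) :=
      ⟨Estar + (t - w₀) * A - 2 * A * (t - w₀) ^ 2 / c,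
        by rintro _ ⟨x, rfl⟩; exact main t ht x⟩
    have h1 := ciInf_le hb ⟨xstar, hxu, hxv⟩
    rw [energy_modify H w e₀ he₀ p₀ hp₀] at h1
    calc F t ≤ Estar + (t - w e₀ p₀) * sqd xstar p₀ := h1
      _ = Estar + (t - w₀) * A := by rw [← hw₀def, ← hAdef]
  have hF0 : F w₀ = Estar := by
    have hfun : (fun (e : Finset V) (p : Sym2 V) =>
        if e = e₀ ∧ p = p₀ then w e₀ p₀ else w e p) = w := by
      funext e p
      by_cases h : e = e₀ ∧ p = p₀
      · obtain ⟨rfl, rfl⟩ := h; simp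
      · simp [h]
    rw [hFdef]
    simp only [hw₀def, hfun]
    rw [show (⨅ x : {x : V → ℝ // x u = 1 ∧ x v = 0}, energy H w x.1)
        = minEnergy H w u v from rfl]
    exact hopt.symm
  rw [hasDerivAt_iff_isLittleO, Asymptotics.isLittleO_iff]
  intro ε hε
  have hδ : 0 < min (c / 2) (ε * c / (2 * A + 1)) :=
    lt_min (by linarith) (div_pos (mul_pos hε hc) (by linarith))
  filter_upwards [Metric.ball_mem_nhds w₀ hδ] with t ht
  rw [Metric.mem_ball, Real.dist_eq] at ht
  have ht1 : |t - w₀| ≤ c / 2 := le_of_lt (lt_of_lt_of_le ht (min_le_left _ _))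
  have ht2 : |t - w₀| < ε * c / (2 * A + 1) := lt_of_lt_of_le ht (min_le_right _ _)
  have h2 : |t - w₀| * (2 * A + 1) ≤ ε * c := by
    have := (lt_div_iff₀ (show (0:ℝ) < 2 * A + 1 by linarith)).mp ht2
    linarith
  have hl := lower t ht1
  have hu := upper t ht1
  rw [smul_eq_mul, Real.norm_eq_abs, Real.norm_eq_abs, hF0]
  rw [abs_le]
  constructor
  · have hq : 2 * A * (t - w₀) ^ 2 / c ≤ ε * |t - w₀| := by
      rw [div_le_iff₀ hc]
      nlinarith [mul_le_mul_of_nonneg_right h2 (abs_nonneg (t - w₀)),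
        sq_abs (t - w₀), abs_nonneg (t - w₀), hA]
    nlinarith [hl]
  · have : F t - Estar - (t - w₀) * sqd xstar p₀ ≤ 0 := by
      rw [← hAdef]; linarith
    have hnn : 0 ≤ ε * |t - w₀| := mul_nonneg hε.le (abs_nonneg _)
    linarith
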